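/- arXiv:2010.10030 — 2 statements merged into one kernel-verified Lean document; each statement's English description precedes it below -/
import Mathlib

section
/- (Signal-term second moment, Lemma 4 of Appendix B.) Under the channel model, for i ∈ [d] set j(i) := i if i ≤ d/2 and j(i) := i − d/2 otherwise, and define the signal-term error E_i := (1/M)·Σ_{m=1}^M ((1/(K σ_h²))·Σ_{k=1}^K |h_{m,k,j(i)}|² − 1)·Δθ_{m,i}. Then Σ_{i=1}^d E[E_i²] = (1/(K M²))·Σ_{m=1}^M E[‖Δθ_m‖²]. -/
open MeasureTheory ProbabilityTheory

noncomputable section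

/-- A complex random variable is `CN(0, σ²)`-distributed if its real and imaginary parts are
independent centered real Gaussian random variables, each of variance `σ²/2`. -/
def IsCN {Ω : Type*} [MeasurableSpace Ω] (P : Measure Ω) (σ2 : ℝ) (w : Ω → ℂ) : Prop :=
  IndepFun (fun ω => (w ω).re) (fun ω => (w ω).im) P ∧
    P.map (fun ω => (w ω).re) = gaussianReal 0 (Real.toNNReal (σ2 / 2)) ∧
    P.map (fun ω => (w ω).im) = gaussianReal 0 (Real.toNNReal (σ2 / 2))

/-- A complex random variable is centered and square-integrable with second moment `σ2`. -/
def IsCenteredL2 {Ω : Type*} [MeasurableSpace Ω] (P : Measure Ω) (σ2 : ℝ) (w : Ω → ℂ) : Prop :=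
  Measurable w ∧ MemLp w 2 P ∧ (∫ ω, w ω ∂P) = 0 ∧ (∫ ω, Complex.normSq (w ω) ∂P) = σ2

/-- The index `i` viewed in the lower half of `Fin (2*s)`. -/
def idxLo (s : ℕ) (i : Fin s) : Fin (2 * s) := ⟨i.1, by have := i.2; omega⟩

/-- The index `s + i` in the upper half of `Fin (2*s)`. -/
def idxHi (s : ℕ) (i : Fin s) : Fin (2 * s) := ⟨s + i.1, by have := i.2; omega⟩

/-- The complexified local update `c_{m,i} = Δθ_{m,i} + √(−1) Δθ_{m,d/2+i}`. -/
def cval (s : ℕ) (v : Fin (2 * s) → ℝ) (i : Fin s) : ℂ := ⟨v (idxLo s i), v (idxHi s i)⟩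

/-- Dispatcher extracting real parts on the lower half of the coordinates and imaginary
parts on the upper half: `(reImPart s y) j = Re (y j)` for `j < s` and `= Im (y (j − s))`
for `s ≤ j < 2s`. -/
def reImPart {Ω : Type*} (s : ℕ) (y : Fin s → Ω → ℂ) (j : Fin (2 * s)) (ω : Ω) : ℝ :=
  if hlt : (j : ℕ) < s then (y ⟨j.1, hlt⟩ ω).re
  else (y ⟨j.1 - s, by have := j.2; omega⟩ ω).im

/-- `jmap s i = i` for `i < s` and `i − s` otherwise (the subchannel index of coordinate `i`). -/
def jmap (s : ℕ) (i : Fin (2 * s)) : Fin s :=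
  if hlt : (i : ℕ) < s then ⟨i.1, hlt⟩ else ⟨i.1 - s, by have := i.2; omega⟩

open scoped NNReal

/-!
Write `E_i = M⁻¹ ∑ₘ Yₘ Δθ_{m,i}` with `Yₘ = (K σ_h²)⁻¹ ∑ₖ |h_{m,k,j(i)}|² - 1`.
Since `|h|² = (Re h)² + (Im h)²` with independent `N(0, σ_h²/2)` parts, it has mean `σ_h²` and
variance `σ_h⁴` (the Gaussian fourth moment `3v²` is read off the moment generating function).
Independence of the gains makes the `Yₘ` centered and uncorrelated with `E[Yₘ²] = 1/K`, and
independence of the gains from the updates then gives `E[E_i²] = (K M²)⁻¹ ∑ₘ E[Δθ_{m,i}²]`.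
-/

lemma deriv_mul_exp_half_mul_sq (a : ℝ) {q q' r : ℝ → ℝ} (hq : ∀ t, HasDerivAt q (q' t) t)
    (hr : ∀ t, r t = q' t + a * t * q t) :
    deriv (fun t => q t * Real.exp (a * t ^ 2 / 2)) = fun t => r t * Real.exp (a * t ^ 2 / 2) := by
  funext t
  have he : HasDerivAt (fun t => Real.exp (a * t ^ 2 / 2))
      (Real.exp (a * t ^ 2 / 2) * (a * t)) t :=
    (((hasDerivAt_pow 2 t).const_mul a).div_const 2).exp.congr_deriv (by push_cast; ring)
  exact ((hq t).mul he).deriv.trans (by rw [hr]; ring)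

lemma iteratedDeriv_four_exp_half_mul_sq (a : ℝ) :
    iteratedDeriv 4 (fun t => Real.exp (a * t ^ 2 / 2)) 0 = 3 * a ^ 2 := by
  have d1 := deriv_mul_exp_half_mul_sq a (q := fun _ => 1) (r := fun t => a * t)
    (fun t => hasDerivAt_const t 1) (fun t => by ring)
  have d2 := deriv_mul_exp_half_mul_sq a (q := fun t => a * t) (r := fun t => a + a ^ 2 * t ^ 2)
    (fun t => (hasDerivAt_id' t).const_mul a) (fun t => by ring)
  have d3 := deriv_mul_exp_half_mul_sq a (q := fun t => a + a ^ 2 * t ^ 2)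
    (r := fun t => 3 * a ^ 2 * t + a ^ 3 * t ^ 3)
    (fun t => ((hasDerivAt_pow 2 t).const_mul (a ^ 2)).const_add a) (fun t => by push_cast; ring)
  have d4 := deriv_mul_exp_half_mul_sq a (q := fun t => 3 * a ^ 2 * t + a ^ 3 * t ^ 3)
    (r := fun t => 3 * a ^ 2 + 6 * a ^ 3 * t ^ 2 + a ^ 4 * t ^ 4)
    (fun t => ((hasDerivAt_id' t).const_mul (3 * a ^ 2)).add
      ((hasDerivAt_pow 3 t).const_mul (a ^ 3)))
    (fun t => by push_cast; ring)
  simp only [iteratedDeriv_succ, iteratedDeriv_zero]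
  rw [show (fun t => Real.exp (a * t ^ 2 / 2)) = fun t => 1 * Real.exp (a * t ^ 2 / 2) by simp,
    d1, d2, d3, d4]
  simp

lemma integral_pow_four_gaussianReal (v : ℝ≥0) :
    ∫ x, x ^ 4 ∂gaussianReal 0 v = 3 * (v : ℝ) ^ 2 := by
  have := iteratedDeriv_mgf_zero (X := fun x : ℝ => x) (μ := gaussianReal 0 v) (by simp) 4
  simp only [mgf_fun_id_gaussianReal, zero_mul, zero_add] at this
  rw [iteratedDeriv_four_exp_half_mul_sq] at this
  exact this.symm

lemma integral_sq_gaussianReal (v : ℝ≥0) :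
    ∫ x, x ^ 2 ∂gaussianReal 0 v = v := by
  simpa [variance_eq_integral measurable_id'.aemeasurable] using
    variance_fun_id_gaussianReal (μ := 0) (v := v)

lemma memLp_sq_gaussianReal (v : ℝ≥0) : MemLp (fun x : ℝ => x ^ 2) 2 (gaussianReal 0 v) := by
  refine (memLp_two_iff_integrable_sq (by fun_prop)).2 ?_
  refine ((memLp_id_gaussianReal 4).integrable_norm_pow (by norm_num)).congr
    (.of_forall fun x => ?_)
  simp [← pow_mul, Even.pow_abs ⟨2, rfl⟩]

lemma variance_sq_gaussianReal (v : ℝ≥0) :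
    Var[fun x : ℝ => x ^ 2; gaussianReal 0 v] = 2 * (v : ℝ) ^ 2 := by
  rw [variance_eq_sub (memLp_sq_gaussianReal v)]
  simp only [Pi.pow_apply, ← pow_mul, integral_pow_four_gaussianReal, integral_sq_gaussianReal]
  ring

section Law

variable {Ω : Type*} [MeasurableSpace Ω] {P : Measure Ω} {X : Ω → ℝ} {v : ℝ≥0}

lemma hasLaw_of_map_eq {𝓧 : Type*} [MeasurableSpace 𝓧] {Y : Ω → 𝓧} {μ : Measure 𝓧} [NeZero μ]
    (hY : P.map Y = μ) : HasLaw Y μ P :=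
  ⟨aemeasurable_of_map_neZero (hY ▸ inferInstance), hY⟩

lemma ProbabilityTheory.HasLaw.memLp_sq_of_gaussianReal (hX : HasLaw X (gaussianReal 0 v) P) :
    MemLp (fun ω => X ω ^ 2) 2 P :=
  (hX.map_eq ▸ memLp_sq_gaussianReal v).comp_of_map hX.aemeasurable

lemma ProbabilityTheory.HasLaw.integral_sq_of_gaussianReal (hX : HasLaw X (gaussianReal 0 v) P) :
    ∫ ω, X ω ^ 2 ∂P = v :=
  (hX.integral_comp (f := fun x => x ^ 2) (by fun_prop)).trans (integral_sq_gaussianReal v)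

lemma ProbabilityTheory.HasLaw.variance_sq_of_gaussianReal (hX : HasLaw X (gaussianReal 0 v) P) :
    Var[fun ω => X ω ^ 2; P] = 2 * (v : ℝ) ^ 2 := by
  rw [← variance_sq_gaussianReal v, ← hX.map_eq, variance_map (by fun_prop) hX.aemeasurable]
  rfl

end Law

section ComplexNormal

variable {Ω : Type*} [MeasurableSpace Ω] {P : Measure Ω} {σ2 : ℝ} {w : Ω → ℂ}

lemma normSq_eq_re_sq_add_im_sq (z : ℂ) : Complex.normSq z = z.re ^ 2 + z.im ^ 2 := by
  rw [Complex.normSq_apply]; ring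

lemma IsCN.memLp_normSq (hw : IsCN P σ2 w) : MemLp (fun ω => Complex.normSq (w ω)) 2 P := by
  simp only [normSq_eq_re_sq_add_im_sq]
  exact (hasLaw_of_map_eq hw.2.1).memLp_sq_of_gaussianReal.add
    (hasLaw_of_map_eq hw.2.2).memLp_sq_of_gaussianReal

lemma IsCN.integral_normSq (hw : IsCN P σ2 w) (hσ2 : 0 ≤ σ2) :
    ∫ ω, Complex.normSq (w ω) ∂P = σ2 := by
  have hre := hasLaw_of_map_eq hw.2.1
  have him := hasLaw_of_map_eq hw.2.2
  have := hre.isProbabilityMeasure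
  simp only [normSq_eq_re_sq_add_im_sq]
  rw [integral_add (hre.memLp_sq_of_gaussianReal.integrable one_le_two)
      (him.memLp_sq_of_gaussianReal.integrable one_le_two),
    hre.integral_sq_of_gaussianReal, him.integral_sq_of_gaussianReal,
    Real.coe_toNNReal _ (by positivity)]
  ring

lemma IsCN.variance_normSq (hw : IsCN P σ2 w) (hσ2 : 0 ≤ σ2) :
    Var[fun ω => Complex.normSq (w ω); P] = σ2 ^ 2 := by
  have hre := hasLaw_of_map_eq hw.2.1
  have him := hasLaw_of_map_eq hw.2.2
  simp only [normSq_eq_re_sq_add_im_sq]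
  rw [IndepFun.variance_fun_add hre.memLp_sq_of_gaussianReal him.memLp_sq_of_gaussianReal
      (hw.1.comp (measurable_id.pow_const 2) (measurable_id.pow_const 2)),
    hre.variance_sq_of_gaussianReal, him.variance_sq_of_gaussianReal,
    Real.coe_toNNReal _ (by positivity)]
  ring

end ComplexNormal

section SecondMoments

variable {Ω : Type*} [MeasurableSpace Ω] {P : Measure Ω}

lemma covariance_normSq_of_iIndepFun {ι : Type*} [DecidableEq ι] [IsProbabilityMeasure P]
    {σ2 : ℝ} {w : ι → Ω → ℂ} (hind : iIndepFun w P) (hw : ∀ i, IsCN P σ2 (w i))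
    (hσ2 : 0 ≤ σ2) (i j : ι) :
    cov[fun ω => Complex.normSq (w i ω), fun ω => Complex.normSq (w j ω); P]
      = if i = j then σ2 ^ 2 else 0 := by
  split_ifs with hij
  · subst hij
    rw [covariance_self (hw i).memLp_normSq.aemeasurable, (hw i).variance_normSq hσ2]
  · exact ((hind.indepFun hij).comp Complex.continuous_normSq.measurable
      Complex.continuous_normSq.measurable).covariance_eq_zero (hw i).memLp_normSq
      (hw j).memLp_normSq

lemma integral_mul_normalized_sums_of_uncorrelated {α : Type*} [DecidableEq α]
    [IsProbabilityMeasure P] {K : ℕ} {N : α → Fin K → Ω → ℝ} {μ₀ τ : ℝ} (hN : ∀ a k, MemLp (N a k) 2 P)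
    (hmean : ∀ a k, ∫ ω, N a k ω ∂P = μ₀)
    (hcov : ∀ a b k l, cov[N a k, N b l; P] = if a = b ∧ k = l then τ else 0)
    (hKμ₀ : (K : ℝ) * μ₀ ≠ 0) (a b : α) :
    ∫ ω, (((K : ℝ) * μ₀)⁻¹ * ∑ k, N a k ω - 1) * (((K : ℝ) * μ₀)⁻¹ * ∑ k, N b k ω - 1) ∂P
      = if a = b then τ / (K * μ₀ ^ 2) else 0 := by
  set c := ((K : ℝ) * μ₀)⁻¹
  have hsum : ∀ a, MemLp (fun ω => ∑ k, N a k ω) 2 P := fun a =>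
    memLp_finsetSum _ fun k _ => hN a k
  have hY : ∀ a, MemLp (fun ω => c * ∑ k, N a k ω - 1) 2 P := fun a =>
    ((hsum a).const_mul c).sub (memLp_const 1)
  have hcentered : ∀ a, ∫ ω, (c * ∑ k, N a k ω - 1) ∂P = 0 := fun a => by
    rw [integral_sub ((hsum a).integrable one_le_two |>.const_mul c) (integrable_const 1),
      integral_const_mul, integral_finsetSum _ fun k _ => (hN a k).integrable one_le_two]
    simp only [hmean, Finset.sum_const, Finset.card_univ, Fintype.card_fin, nsmul_eq_mul,
      integral_const, probReal_univ, one_smul, c, inv_mul_cancel₀ hKμ₀, sub_self]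
  calc ∫ ω, (c * ∑ k, N a k ω - 1) * (c * ∑ k, N b k ω - 1) ∂P
      = cov[fun ω => c * ∑ k, N a k ω - 1, fun ω => c * ∑ k, N b k ω - 1; P] := by
        rw [covariance_eq_sub (hY a) (hY b), hcentered a, hcentered b, mul_zero, sub_zero]
        rfl
    _ = c * c * ∑ k, ∑ l, cov[N a k, N b l; P] := by
        rw [covariance_sub_const_left (((hsum a).const_mul c).integrable one_le_two),
          covariance_sub_const_right (((hsum b).const_mul c).integrable one_le_two),
          covariance_const_mul_left, covariance_const_mul_right,
          covariance_fun_sum_fun_sum (hN a) (hN b), mul_assoc]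
    _ = if a = b then τ / (K * μ₀ ^ 2) else 0 := by
        simp only [hcov]
        split_ifs with hab
        · simp only [hab, true_and, Finset.sum_ite_eq, Finset.mem_univ, if_true,
            Finset.sum_const, Finset.card_univ, Fintype.card_fin, nsmul_eq_mul, c]
          field_simp
        · simp [hab]

lemma integral_sq_sum_mul_of_indepFun {ι : Type*} [Fintype ι] [DecidableEq ι] {Y X : ι → Ω → ℝ}
    {v : ℝ} (hYX : IndepFun (fun ω i => Y i ω) (fun ω i => X i ω) P)
    (hY : ∀ i, MemLp (Y i) 2 P) (hX : ∀ i, MemLp (X i) 2 P)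
    (hYY : ∀ i j, ∫ ω, Y i ω * Y j ω ∂P = if i = j then v else 0) :
    ∫ ω, (∑ i, Y i ω * X i ω) ^ 2 ∂P = v * ∑ i, ∫ ω, X i ω ^ 2 ∂P := by
  have hindep : ∀ i j, IndepFun (fun ω => Y i ω * Y j ω) (fun ω => X i ω * X j ω) P :=
    fun i j => hYX.comp (measurable_pi_apply i |>.mul (measurable_pi_apply j))
      (measurable_pi_apply i |>.mul (measurable_pi_apply j))
  have hint : ∀ i j, Integrable (fun ω => Y i ω * Y j ω * (X i ω * X j ω)) P := fun i j =>
    (hindep i j).integrable_mul ((hY i).integrable_mul (hY j)) ((hX i).integrable_mul (hX j))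
  calc ∫ ω, (∑ i, Y i ω * X i ω) ^ 2 ∂P
      = ∫ ω, ∑ i, ∑ j, Y i ω * Y j ω * (X i ω * X j ω) ∂P := by
        congr with ω
        rw [sq, Finset.sum_mul_sum]
        exact Finset.sum_congr rfl fun i _ => Finset.sum_congr rfl fun j _ => by ring
    _ = ∑ i, ∑ j, (∫ ω, Y i ω * Y j ω ∂P) * ∫ ω, X i ω * X j ω ∂P := by
        rw [integral_finsetSum _ fun i _ => integrable_finsetSum _ fun j _ => hint i j]
        refine Finset.sum_congr rfl fun i _ => ?_
        rw [integral_finsetSum _ fun j _ => hint i j]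
        exact Finset.sum_congr rfl fun j _ => (hindep i j).integral_fun_mul_eq_mul_integral
          ((hY i).integrable_mul (hY j)).aestronglyMeasurable
          ((hX i).integrable_mul (hX j)).aestronglyMeasurable
    _ = v * ∑ i, ∫ ω, X i ω ^ 2 ∂P := by
        simp only [hYY, ite_mul, zero_mul, Finset.sum_ite_eq, Finset.mem_univ, if_true,
          Finset.mul_sum, sq]

lemma memLp_normalized_normSq_sum {α ι : Type*} [IsFiniteMeasure P] {K : ℕ} {σ2 : ℝ}
    {h : α → Fin K → ι → Ω → ℂ} (hh : ∀ a k i, IsCN P σ2 (h a k i)) (c : ℝ) (a : α) (i : ι) :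
    MemLp (fun ω => c * ∑ k, Complex.normSq (h a k i ω) - 1) 2 P :=
  ((memLp_finsetSum _ fun k _ => (hh a k i).memLp_normSq).const_mul c).sub (memLp_const 1)

lemma integral_mul_normalized_normSq_sums {α ι : Type*} [DecidableEq α] [DecidableEq ι]
    [IsProbabilityMeasure P] {K : ℕ} {σ2 : ℝ} {h : α → Fin K → ι → Ω → ℂ} (hK : K ≠ 0)
    (hσ2 : 0 < σ2) (hh : ∀ a k i, IsCN P σ2 (h a k i))
    (hindep : iIndepFun (fun p : α × Fin K × ι => h p.1 p.2.1 p.2.2) P) (i : ι) (a b : α) :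
    ∫ ω, (((K : ℝ) * σ2)⁻¹ * ∑ k, Complex.normSq (h a k i ω) - 1) *
      (((K : ℝ) * σ2)⁻¹ * ∑ k, Complex.normSq (h b k i ω) - 1) ∂P
      = if a = b then (K : ℝ)⁻¹ else 0 := by
  have hK0 : (K : ℝ) ≠ 0 := Nat.cast_ne_zero.2 hK
  rw [integral_mul_normalized_sums_of_uncorrelated (τ := σ2 ^ 2)
    (N := fun a k ω => Complex.normSq (h a k i ω)) (fun a k => (hh a k i).memLp_normSq)
    (fun a k => (hh a k i).integral_normSq hσ2.le)
    (fun a b k l => (covariance_normSq_of_iIndepFun hindep (fun p => hh _ _ _) hσ2.le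
      (a, k, i) (b, l, i)).trans (by simp only [Prod.mk.injEq, and_true]))
    (mul_ne_zero hK0 hσ2.ne')]
  congr 1
  field_simp

end SecondMoments

theorem signal_term_second_moment_general
    {Ω : Type*} [MeasurableSpace Ω] (P : Measure Ω) [IsProbabilityMeasure P]
    (M K s : ℕ) (hK : 1 ≤ K)
    (σh : ℝ) (hσh : 0 < σh)
    (h : Fin M → Fin K → Fin s → Ω → ℂ)
    (hhCN : ∀ m k i, IsCN P (σh ^ 2) (h m k i))
    (Δθ : Fin M → Ω → Fin (2 * s) → ℝ)
    (hΔL2 : ∀ m (j : Fin (2 * s)), MemLp (fun ω => Δθ m ω j) 2 P)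
    (hindep : iIndepFun
      (fun p : Fin M × Fin K × Fin s => h p.1 p.2.1 p.2.2) P)
    (hcross : IndepFun
      (fun ω => fun p : Fin M × Fin K × Fin s => h p.1 p.2.1 p.2.2 ω)
      (fun ω => fun m : Fin M => Δθ m ω) P) :
    ∑ i : Fin (2 * s),
        (∫ ω, ((M : ℝ)⁻¹ * ∑ m, (((K : ℝ) * σh ^ 2)⁻¹ *
            (∑ k, Complex.normSq (h m k (jmap s i) ω)) - 1) * Δθ m ω i) ^ 2 ∂P)
      = ((K : ℝ) * (M : ℝ) ^ 2)⁻¹ *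
        ∑ m, (∫ ω, ∑ j : Fin (2 * s), (Δθ m ω j) ^ 2 ∂P) := by
  have hE : ∀ i, ∫ ω, ((M : ℝ)⁻¹ * ∑ m, (((K : ℝ) * σh ^ 2)⁻¹ *
      (∑ k, Complex.normSq (h m k (jmap s i) ω)) - 1) * Δθ m ω i) ^ 2 ∂P
      = ((M : ℝ)⁻¹) ^ 2 * ((K : ℝ)⁻¹ * ∑ m, ∫ ω, Δθ m ω i ^ 2 ∂P) := fun i => by
    have hgains : Measurable fun (u : Fin M × Fin K × Fin s → ℂ) (m : Fin M) =>
        ((K : ℝ) * σh ^ 2)⁻¹ * ∑ k, Complex.normSq (u (m, k, jmap s i)) - 1 := by fun_prop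
    have hupdates : Measurable fun (v : Fin M → Fin (2 * s) → ℝ) (m : Fin M) => v m i := by
      fun_prop
    have hindep_updates : IndepFun
        (fun ω m => ((K : ℝ) * σh ^ 2)⁻¹ * ∑ k, Complex.normSq (h m k (jmap s i) ω) - 1)
        (fun ω m => Δθ m ω i) P := hcross.comp hgains hupdates
    simp_rw [mul_pow]
    rw [integral_const_mul, integral_sq_sum_mul_of_indepFun hindep_updates
      (fun m => memLp_normalized_normSq_sum hhCN _ m _) (fun m => hΔL2 m i)
      (integral_mul_normalized_normSq_sums (by omega) (by positivity) hhCN hindep _)]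
  simp_rw [hE, integral_finsetSum _ fun j _ => (hΔL2 _ j).integrable_sq, Finset.mul_sum]
  rw [Finset.sum_comm]
  refine Finset.sum_congr rfl fun m _ => Finset.sum_congr rfl fun i _ => ?_
  rw [mul_inv, inv_pow]
  ring

/-- **Signal-term second moment (Lemma 4 of Appendix B).**  Under the channel model with
mutually independent `CN(0, σ_h²)` gains `h m k i`, independent of the square-integrable local
updates `Δθ m`, the signal-term error
`E_i = (1/M) ∑ₘ ((1/(K σ_h²)) ∑ₖ |h m k (j i)|² − 1) Δθ_{m,i}` satisfies
`∑_{i=1}^d E[E_i²] = (1/(K M²)) ∑ₘ E[‖Δθ m‖²]`. -/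
theorem signal_term_second_moment
    {Ω : Type*} [MeasurableSpace Ω] (P : Measure Ω) [IsProbabilityMeasure P]
    (M K s : ℕ) (hM : 1 ≤ M) (hK : 1 ≤ K) (hs : 1 ≤ s)
    (σh : ℝ) (hσh : 0 < σh)
    (h : Fin M → Fin K → Fin s → Ω → ℂ)
    (hhmeas : ∀ m k i, Measurable (h m k i))
    (hhCN : ∀ m k i, IsCN P (σh ^ 2) (h m k i))
    (Δθ : Fin M → Ω → Fin (2 * s) → ℝ)
    (hΔmeas : ∀ m, Measurable (Δθ m))
    (hΔL2 : ∀ m (j : Fin (2 * s)), MemLp (fun ω => Δθ m ω j) 2 P)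
    (hindep : iIndepFun
      (fun p : Fin M × Fin K × Fin s => h p.1 p.2.1 p.2.2) P)
    (hcross : IndepFun
      (fun ω => fun p : Fin M × Fin K × Fin s => h p.1 p.2.1 p.2.2 ω)
      (fun ω => fun m : Fin M => Δθ m ω) P) :
    ∑ i : Fin (2 * s),
        (∫ ω, ((M : ℝ)⁻¹ * ∑ m, (((K : ℝ) * σh ^ 2)⁻¹ *
            (∑ k, Complex.normSq (h m k (jmap s i) ω)) - 1) * Δθ m ω i) ^ 2 ∂P)
      = ((K : ℝ) * (M : ℝ) ^ 2)⁻¹ *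
        ∑ m, (∫ ω, ∑ j : Fin (2 * s), (Δθ m ω j) ^ 2 ∂P) :=
  signal_term_second_moment_general P M K s hK σh hσh h hhCN Δθ hΔL2 hindep hcross
end
end

section
/- (Lemma TermE, deterministic core of Appendix D.) Let F_m : ℝ^d → ℝ, m ∈ [M], be differentiable and μ-strongly convex with F_m* := inf F_m, let F := (1/M)·Σ_m F_m have global minimizer θ* with F* := F(θ*), and set Γ := F* − (1/M)·Σ_m F_m*. Let τ ≥ 1, 0 < η ≤ 1, θ ∈ ℝ^d, and let θ_m^i ∈ ℝ^d be arbitrary points for m ∈ [M] and i = 2, …, τ. Then (2η/M)·Σ_{m=1}^M Σ_{i=2}^τ ⟨θ* − θ_m^i, ∇F_m(θ_m^i)⟩ ≤ −μη(1−η)(τ−1)·‖θ − θ*‖² + (μ(1−η)/M)·Σ_{m=1}^M Σ_{i=2}^τ ‖θ_m^i − θ‖² + 2η(τ−1)·Γ. -/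
/-!
Fix `m, i` and write `x = θ_m^i`. Strong convexity from `x` to `θ*` gives
`⟪θ* - x, ∇F_m x⟫ ≤ F_m θ* - F_m* - μ/2 ‖x - θ*‖²`, and the identity
`η ‖a + b‖² + (1 - η) ‖b‖² - η (1 - η) ‖a‖² = ‖η a + b‖²` with `a = θ - θ*`, `b = x - θ`
trades `‖x - θ*‖²` for `‖θ - θ*‖²` and `‖x - θ‖²`. Summing over `i` and averaging over `m`
turns `F_m θ*` into `F̄ θ*`. The infima `F_m*` are finite (so `sInf` is not a junk value)
because strong convexity bounds `F_m` below by a quadratic.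
-/

open RealInnerProductSpace

section

variable {E : Type*} [NormedAddCommGroup E] [InnerProductSpace ℝ E]

theorem neg_norm_sq_div_le_inner_add_norm_sq {μ : ℝ} (hμ : 0 < μ) (u g : E) :
    -(‖g‖ ^ 2 / (2 * μ)) ≤ ⟪u, g⟫ + μ / 2 * ‖u‖ ^ 2 := by
  have hsq : 0 ≤ ‖μ • u + g‖ ^ 2 := sq_nonneg _
  rw [norm_add_sq_real, norm_smul, real_inner_smul_left, Real.norm_of_nonneg hμ.le] at hsq
  rw [neg_le_iff_add_nonneg, ← mul_nonneg_iff_of_pos_left (by positivity : 0 < 2 * μ)]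
  field_simp
  nlinarith

theorem bddBelow_range_of_quadratic_minorant {f : E → ℝ} {μ : ℝ} (hμ : 0 < μ) (w g : E)
    (h : ∀ v, f w + ⟪v - w, g⟫ + μ / 2 * ‖v - w‖ ^ 2 ≤ f v) :
    BddBelow (Set.range f) := by
  refine ⟨f w - ‖g‖ ^ 2 / (2 * μ), ?_⟩
  rintro _ ⟨v, rfl⟩
  linarith [h v, neg_norm_sq_div_le_inner_add_norm_sq hμ (v - w) g]

theorem mul_one_sub_mul_norm_sq_le (η : ℝ) (a b : E) :
    η * (1 - η) * ‖a‖ ^ 2 ≤ η * ‖a + b‖ ^ 2 + (1 - η) * ‖b‖ ^ 2 := by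
  have hsq : 0 ≤ ‖η • a + b‖ ^ 2 := sq_nonneg _
  rw [norm_add_sq_real, norm_smul, real_inner_smul_left, Real.norm_eq_abs, mul_pow, sq_abs]
    at hsq
  rw [norm_add_sq_real]
  nlinarith

theorem two_mul_inner_le_of_quadratic_lower_bound {f : E → ℝ} {μ η c : ℝ} (hμ : 0 ≤ μ)
    (hη : 0 ≤ η) {θstar θ x g : E}
    (hsc : f x + ⟪θstar - x, g⟫ + μ / 2 * ‖θstar - x‖ ^ 2 ≤ f θstar) (hc : c ≤ f x) :
    2 * η * ⟪θstar - x, g⟫ ≤ 2 * η * (f θstar - c) - μ * η * (1 - η) * ‖θ - θstar‖ ^ 2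
      + μ * (1 - η) * ‖x - θ‖ ^ 2 := by
  have hyoung := mul_one_sub_mul_norm_sq_le η (θ - θstar) (x - θ)
  rw [sub_add_sub_cancel', norm_sub_rev x] at hyoung
  have := mul_le_mul_of_nonneg_left hyoung hμ
  have := mul_le_mul_of_nonneg_left hsc (by positivity : 0 ≤ 2 * η)
  nlinarith

end

theorem Finset.sum_sum_le_card_mul_sum_add {ι κ : Type*} (s : Finset ι) (t : Finset κ)
    {x y : ι → κ → ℝ} {c : ι → ℝ} (h : ∀ m ∈ s, ∀ i ∈ t, x m i ≤ c m + y m i) :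
    ∑ m ∈ s, ∑ i ∈ t, x m i ≤ t.card * ∑ m ∈ s, c m + ∑ m ∈ s, ∑ i ∈ t, y m i := by
  calc ∑ m ∈ s, ∑ i ∈ t, x m i ≤ ∑ m ∈ s, ∑ i ∈ t, (c m + y m i) :=
        sum_le_sum fun m hm => sum_le_sum fun i hi => h m hm i hi
    _ = _ := by simp only [sum_add_distrib, sum_const, nsmul_eq_mul, mul_sum]

theorem Finset.cast_card_Icc_two {τ : ℕ} (hτ : 1 ≤ τ) :
    ((Finset.Icc 2 τ).card : ℝ) = τ - 1 := by
  rw [Nat.card_Icc, show τ + 1 - 2 = τ - 1 by omega, Nat.cast_sub hτ, Nat.cast_one]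

theorem lemma_termE_general
    (d M τ : ℕ) (hM : 1 ≤ M) (hτ : 1 ≤ τ) (μ : ℝ) (hμ : 0 < μ)
    (η : ℝ) (hη0 : 0 < η)
    (F : Fin M → EuclideanSpace ℝ (Fin d) → ℝ)
    (hsc : ∀ m (v w : EuclideanSpace ℝ (Fin d)),
      F m w + ⟪v - w, gradient (F m) w⟫ + μ / 2 * ‖v - w‖ ^ 2 ≤ F m v)
    (Fbar : EuclideanSpace ℝ (Fin d) → ℝ)
    (hFbar : ∀ v, Fbar v = (M : ℝ)⁻¹ * ∑ m, F m v)
    (θstar : EuclideanSpace ℝ (Fin d))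
    (Γ : ℝ) (hΓ : Γ = Fbar θstar - (M : ℝ)⁻¹ * ∑ m, sInf (Set.range (F m)))
    (θ : EuclideanSpace ℝ (Fin d))
    (θl : Fin M → ℕ → EuclideanSpace ℝ (Fin d)) :
    2 * η / (M : ℝ) * ∑ m, ∑ i ∈ Finset.Icc 2 τ, ⟪θstar - θl m i, gradient (F m) (θl m i)⟫
      ≤ -μ * η * (1 - η) * ((τ : ℝ) - 1) * ‖θ - θstar‖ ^ 2
        + μ * (1 - η) / (M : ℝ) * ∑ m, ∑ i ∈ Finset.Icc 2 τ, ‖θl m i - θ‖ ^ 2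
        + 2 * η * ((τ : ℝ) - 1) * Γ := by
  have hMpos : (0 : ℝ) < M := by exact_mod_cast hM
  set c : Fin M → ℝ := fun m =>
    2 * η * (F m θstar - sInf (Set.range (F m))) - μ * η * (1 - η) * ‖θ - θstar‖ ^ 2
  have hsum_c : ∑ m, c m = M * (2 * η * Γ - μ * η * (1 - η) * ‖θ - θstar‖ ^ 2) := by
    simp only [c, hΓ, hFbar, Finset.sum_sub_distrib, ← Finset.mul_sum, Finset.sum_const,
      Finset.card_univ, Fintype.card_fin, nsmul_eq_mul]
    field_simp
  have hsum := Finset.sum_sum_le_card_mul_sum_add Finset.univ (Finset.Icc 2 τ)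
    (x := fun m i => 2 * η * ⟪θstar - θl m i, gradient (F m) (θl m i)⟫) (c := c)
    (y := fun m i => μ * (1 - η) * ‖θl m i - θ‖ ^ 2) fun m _ i _ =>
      two_mul_inner_le_of_quadratic_lower_bound hμ.le hη0.le (hsc m θstar (θl m i))
        (csInf_le (bddBelow_range_of_quadratic_minorant hμ 0 _ (fun v => hsc m v 0))
          ⟨θl m i, rfl⟩)
  rw [Finset.cast_card_Icc_two hτ, hsum_c] at hsum
  calc 2 * η / M * ∑ m, ∑ i ∈ Finset.Icc 2 τ, ⟪θstar - θl m i, gradient (F m) (θl m i)⟫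
      = (M : ℝ)⁻¹ * ∑ m, ∑ i ∈ Finset.Icc 2 τ,
          2 * η * ⟪θstar - θl m i, gradient (F m) (θl m i)⟫ := by
        simp only [← Finset.mul_sum]; ring
    _ ≤ (M : ℝ)⁻¹ * ((τ - 1) * (M * (2 * η * Γ - μ * η * (1 - η) * ‖θ - θstar‖ ^ 2))
          + ∑ m, ∑ i ∈ Finset.Icc 2 τ, μ * (1 - η) * ‖θl m i - θ‖ ^ 2) := by gcongr
    _ = _ := by simp only [← Finset.mul_sum]; field_simp; ring

/-- **Lemma TermE (deterministic core of Appendix D).**  Let the `F m` be differentiable and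
`μ`-strongly convex with infima `F m* = inf F m`, let `F̄ = (1/M) ∑ₘ F m` have global minimizer
`θ*`, and set `Γ = F̄ θ* − (1/M) ∑ₘ F m*`.  For `τ ≥ 1`, `0 < η ≤ 1`, any `θ` and arbitrary
points `θ_m^i` (`m ∈ [M]`, `i = 2, …, τ`),
`(2η/M) ∑ₘ ∑_{i=2}^τ ⟪θ* − θ_m^i, ∇F m (θ_m^i)⟫
  ≤ −μη(1−η)(τ−1) ‖θ − θ*‖² + (μ(1−η)/M) ∑ₘ ∑_{i=2}^τ ‖θ_m^i − θ‖² + 2η(τ−1) Γ`. -/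
theorem lemma_termE
    (d M τ : ℕ) (hM : 1 ≤ M) (hτ : 1 ≤ τ) (μ : ℝ) (hμ : 0 < μ)
    (η : ℝ) (hη0 : 0 < η) (hη1 : η ≤ 1)
    (F : Fin M → EuclideanSpace ℝ (Fin d) → ℝ)
    (hdiff : ∀ m, Differentiable ℝ (F m))
    (hsc : ∀ m (v w : EuclideanSpace ℝ (Fin d)),
      F m w + ⟪v - w, gradient (F m) w⟫ + μ / 2 * ‖v - w‖ ^ 2 ≤ F m v)
    (Fbar : EuclideanSpace ℝ (Fin d) → ℝ)
    (hFbar : ∀ v, Fbar v = (M : ℝ)⁻¹ * ∑ m, F m v)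
    (θstar : EuclideanSpace ℝ (Fin d)) (hmin : ∀ v, Fbar θstar ≤ Fbar v)
    (Γ : ℝ) (hΓ : Γ = Fbar θstar - (M : ℝ)⁻¹ * ∑ m, sInf (Set.range (F m)))
    (θ : EuclideanSpace ℝ (Fin d))
    (θl : Fin M → ℕ → EuclideanSpace ℝ (Fin d)) :
    2 * η / (M : ℝ) * ∑ m, ∑ i ∈ Finset.Icc 2 τ, ⟪θstar - θl m i, gradient (F m) (θl m i)⟫
      ≤ -μ * η * (1 - η) * ((τ : ℝ) - 1) * ‖θ - θstar‖ ^ 2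
        + μ * (1 - η) / (M : ℝ) * ∑ m, ∑ i ∈ Finset.Icc 2 τ, ‖θl m i - θ‖ ^ 2
        + 2 * η * ((τ : ℝ) - 1) * Γ :=
  lemma_termE_general d M τ hM hτ μ hμ η hη0 F hsc Fbar hFbar θstar Γ hΓ θ θl
end
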